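/- Supraclassicality holds in DF/TT for the conditional-free fragment: if A and B are formulas built only from atoms, ¬, ∧, ∨ (no conditional) and A classically entails B, then ⊨ A →df B in DF/TT, i.e., every trivalent valuation gives A →df B a value ≥ 1/2. -/
import Mathlib


/-- Trivalent truth values: 0, 1/2, 1. -/
inductive V : Type
  | zero
  | half
  | one
deriving DecidableEq, Repr

open V

/-- Strong Kleene negation. -/
def vneg : V → V
  | zero => one
  | half => half
  | one => zero

/-- Strong Kleene conjunction (minimum). -/
def vmin : V → V → V
  | one, b => b
  | half, one => half
  | half, half => half
  | half, zero => zero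
  | zero, _ => zero

/-- Strong Kleene disjunction (maximum). -/
def vmax : V → V → V
  | zero, b => b
  | half, zero => half
  | half, half => half
  | half, one => one
  | one, _ => one

/-- de Finetti conditional. -/
def df : V → V → V
  | one, c => c
  | _, _ => half

/-- Cooper–Cantwell conditional. -/
def cc : V → V → V
  | zero, _ => half
  | _, c => c

/-- Cooper's quasi-conjunction. -/
def qand : V → V → V
  | zero, _ => zero
  | _, zero => zero
  | one, _ => one
  | _, one => one
  | half, half => half

/-- Cooper's quasi-disjunction. -/
def qor : V → V → V
  | one, _ => one
  | _, one => one
  | zero, _ => zero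
  | _, zero => zero
  | half, half => half

/-- "value ≥ 1/2", i.e. designated / tolerantly true. -/
def des (x : V) : Prop := x ≠ V.zero

/-- Formulas with negation, conjunction, disjunction and the de Finetti
indicative conditional. -/
inductive Form : Type
  | atom : ℕ → Form
  | neg : Form → Form
  | and : Form → Form → Form
  | or : Form → Form → Form
  | cond : Form → Form → Form
deriving DecidableEq

/-- Trivalent DF valuation of formulas, extending a valuation of atoms. -/
def val (v : ℕ → V) : Form → V
  | .atom n => v n
  | .neg A => vneg (val v A)
  | .and A B => vmin (val v A) (val v B)
  | .or A B => vmax (val v A) (val v B)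
  | .cond A B => df (val v A) (val v B)

/-- The Strong Kleene material conditional A ⊃ B := ¬(A ∧ ¬B). -/
def mat (A B : Form) : Form := Form.neg (Form.and A (Form.neg B))

/-- Classical (bivalent) evaluation of formulas; on conditional-free formulas
the clause for the conditional is irrelevant. -/
def evalB (w : ℕ → Bool) : Form → Bool
  | .atom n => w n
  | .neg A => !(evalB w A)
  | .and A B => evalB w A && evalB w B
  | .or A B => evalB w A || evalB w B
  | .cond A B => !(evalB w A) || evalB w B

/-- A formula contains no conditional. -/
def condFree : Form → Prop
  | .atom _ => True
  | .neg A => condFree A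
  | .and A B => condFree A ∧ condFree B
  | .or A B => condFree A ∧ condFree B
  | .cond _ _ => False


lemma match_lemma (v : ℕ → V) (w : ℕ → Bool)
    (h1 : ∀ n, v n = one → w n = true) (h0 : ∀ n, v n = zero → w n = false) :
    ∀ A : Form, condFree A →
      (val v A = one → evalB w A = true) ∧ (val v A = zero → evalB w A = false) := by
  intro A
  induction A with
  | atom n => exact fun _ => ⟨h1 n, h0 n⟩
  | neg A ih =>
    intro hc
    obtain ⟨i1, i0⟩ := ih hc
    constructor <;> intro h <;> simp only [val, evalB] at *
    · cases hA : val v A <;> simp [hA, vneg] at h ⊢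
      · exact i0 hA
    · cases hA : val v A <;> simp [hA, vneg] at h ⊢
      · exact i1 hA
  | and A B ihA ihB =>
    intro hc
    obtain ⟨a1, a0⟩ := ihA hc.1
    obtain ⟨b1, b0⟩ := ihB hc.2
    constructor <;> intro h <;> simp only [val, evalB] at *
    · cases hA : val v A <;> cases hB : val v B <;> simp [hA, hB, vmin] at h ⊢
      exact ⟨a1 hA, b1 hB⟩
    · cases hA : val v A <;> cases hB : val v B <;>
        simp [hA, hB, vmin] at h ⊢ <;>
        first
        | simp [a0 hA]
        | simp [b0 hB]
  | or A B ihA ihB =>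
    intro hc
    obtain ⟨a1, a0⟩ := ihA hc.1
    obtain ⟨b1, b0⟩ := ihB hc.2
    constructor <;> intro h <;> simp only [val, evalB] at *
    · cases hA : val v A <;> cases hB : val v B <;> simp [hA, hB, vmax] at h ⊢
      · exact Or.inr (b1 hB)
      · exact Or.inr (b1 hB)
      · exact Or.inl (a1 hA)
      · exact Or.inl (a1 hA)
      · exact Or.inl (a1 hA)
    · cases hA : val v A <;> cases hB : val v B <;> simp [hA, hB, vmax] at h ⊢
      exact ⟨a0 hA, b0 hB⟩
  | cond A B _ _ => intro hc; exact absurd hc id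

/-- Supraclassicality holds in DF/TT for the conditional-free fragment. -/
theorem df_supraclassicality (A B : Form) (hA : condFree A) (hB : condFree B)
    (hcl : ∀ w : ℕ → Bool, evalB w A = true → evalB w B = true) :
    ∀ v : ℕ → V, des (val v (Form.cond A B)) := by
  intro v
  unfold des val
  cases hA1 : val v A with
  | zero => simp [df]
  | half => simp [df]
  | one =>
    simp only [df]
    intro hB0
    set w : ℕ → Bool := fun n => decide (v n = one) with hw
    have h1 : ∀ n, v n = one → w n = true := fun n h => by simp [hw, h]
    have h0 : ∀ n, v n = zero → w n = false := fun n h => by simp [hw, h]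
    have hAtrue := (match_lemma v w h1 h0 A hA).1 hA1
    have hBfalse := (match_lemma v w h1 h0 B hB).2 hB0
    have := hcl w hAtrue
    rw [this] at hBfalse
    exact Bool.noConfusion hBfalse
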